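/- arXiv:2210.02119 — 6 statements merged into one kernel-verified Lean document; each statement's English description precedes it below -/
import Mathlib

section
/- Let H be a real Hilbert space, (Ω, P) a probability space, K ≥ 1, and let π : Fin K → ℝ be a probability vector. Let η > 0 and let n, E_l be natural numbers with 0 < n ≤ E_l. For each client l ∈ Fin K and each step τ ∈ {0, …, n−1}, let g^l_τ : Ω → H be a Bochner square-integrable random vector, and let G(τ) ≥ 0 and σ_l(τ) ≥ 0 be constants such that ‖E[g^l_τ]‖ ≤ G(τ) and E‖g^l_τ − E[g^l_τ]‖² ≤ σ_l(τ)². Then for every client k ∈ Fin K: E ‖ Σ_{τ=0}^{n−1} η g^k_τ − Σ_{l=1}^{K} π_l Σ_{τ=0}^{n−1} η g^l_τ ‖² ≤ 2 η² E_l Σ_{τ=0}^{n−1} [ (K+1) G(τ)² + σ_k(τ)² + Σ_{l=1}^{K} π_l σ_l(τ)² ]. -/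
/-!
Write `S l = ∑ τ, η • g l τ` for the accumulated steps of client `l`. Since
`‖a - b‖² ≤ 2‖a‖² + 2‖b‖²` and `‖·‖²` is convex, the deviation is at most
`2 E‖S k‖² + 2 ∑ l, π l E‖S l‖²`. Cauchy–Schwarz over the `n` steps gives
`E‖S l‖² ≤ η² n ∑ τ, E‖g l τ‖²`, and the bias–variance identity
`E‖g‖² = ‖E g‖² + E‖g - E g‖²` bounds each summand by `G τ² + σ l τ²`.
The stated constant then follows from `n ≤ El` and `2 ≤ K + 1`.
-/

open Finset MeasureTheory

theorem sum_mul_sum_add_of_sum_eq_one {ι κ : Type*} (s : Finset ι) (t : Finset κ)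
    {w : ι → ℝ} (hw : ∑ i ∈ s, w i = 1) (a : κ → ℝ) (b : ι → κ → ℝ) :
    ∑ i ∈ s, w i * ∑ j ∈ t, (a j + b i j) = ∑ j ∈ t, (a j + ∑ i ∈ s, w i * b i j) := by
  simp only [mul_sum]
  rw [sum_comm]
  refine sum_congr rfl fun j _ => ?_
  simp only [mul_add, sum_add_distrib, ← sum_mul, hw, one_mul]

section SecondMoments

variable {Ω : Type*} [MeasurableSpace Ω] {μ : Measure Ω}

section NormedGroup

variable {E : Type*} [NormedAddCommGroup E]

theorem integral_norm_sub_sq_le {f h : Ω → E} (hf : MemLp f 2 μ) (hh : MemLp h 2 μ) :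
    ∫ ω, ‖f ω - h ω‖ ^ 2 ∂μ ≤ 2 * ∫ ω, ‖f ω‖ ^ 2 ∂μ + 2 * ∫ ω, ‖h ω‖ ^ 2 ∂μ := by
  have hf2 := (hf.integrable_norm_pow two_ne_zero).const_mul 2
  have hh2 := (hh.integrable_norm_pow two_ne_zero).const_mul 2
  rw [← integral_const_mul, ← integral_const_mul, ← integral_add hf2 hh2]
  refine integral_mono ((hf.sub hh).integrable_norm_pow two_ne_zero) (hf2.add hh2) fun ω => ?_
  calc ‖f ω - h ω‖ ^ 2 ≤ (‖f ω‖ + ‖h ω‖) ^ 2 := by gcongr; exact norm_sub_le _ _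
    _ ≤ 2 * ‖f ω‖ ^ 2 + 2 * ‖h ω‖ ^ 2 := add_sq_le.trans_eq (mul_add _ _ _)

theorem integral_norm_sum_sq_le_card_mul {ι : Type*} (s : Finset ι) {f : ι → Ω → E}
    (hf : ∀ i ∈ s, MemLp (f i) 2 μ) :
    ∫ ω, ‖∑ i ∈ s, f i ω‖ ^ 2 ∂μ ≤ #s * ∑ i ∈ s, ∫ ω, ‖f i ω‖ ^ 2 ∂μ := by
  have hsq : ∀ i ∈ s, Integrable (fun ω => ‖f i ω‖ ^ 2) μ := fun i hi =>
    (hf i hi).integrable_norm_pow two_ne_zero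
  rw [← integral_finsetSum s hsq, ← integral_const_mul]
  refine integral_mono ((memLp_finsetSum s hf).integrable_norm_pow two_ne_zero)
    ((integrable_finsetSum s hsq).const_mul _) fun ω => ?_
  calc ‖∑ i ∈ s, f i ω‖ ^ 2 ≤ (∑ i ∈ s, ‖f i ω‖) ^ 2 := by gcongr; exact norm_sum_le _ _
    _ ≤ #s * ∑ i ∈ s, ‖f i ω‖ ^ 2 := sq_sum_le_card_mul_sum_sq

theorem integral_norm_convex_comb_sq_le [NormedSpace ℝ E] {ι : Type*} (s : Finset ι) {w : ι → ℝ}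
    (hw₀ : ∀ i ∈ s, 0 ≤ w i) (hw₁ : ∑ i ∈ s, w i = 1) {f : ι → Ω → E}
    (hf : ∀ i ∈ s, MemLp (f i) 2 μ) :
    ∫ ω, ‖∑ i ∈ s, w i • f i ω‖ ^ 2 ∂μ ≤ ∑ i ∈ s, w i * ∫ ω, ‖f i ω‖ ^ 2 ∂μ := by
  have hsq : ∀ i ∈ s, Integrable (fun ω => w i * ‖f i ω‖ ^ 2) μ := fun i hi =>
    ((hf i hi).integrable_norm_pow two_ne_zero).const_mul _
  have hsum : Integrable (fun ω => ‖∑ i ∈ s, w i • f i ω‖ ^ 2) μ :=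
    (memLp_finsetSum s fun i hi => (hf i hi).const_smul (w i)).integrable_norm_pow two_ne_zero
  simp_rw [← integral_const_mul]
  rw [← integral_finsetSum s hsq]
  refine integral_mono hsum (integrable_finsetSum s hsq) fun ω => ?_
  exact (convexOn_univ_norm.pow (fun _ _ => norm_nonneg _) 2).map_sum_le hw₀ hw₁
    fun _ _ => Set.mem_univ _

theorem integral_norm_sub_convex_comb_sq_le [NormedSpace ℝ E] {ι : Type*} (s : Finset ι)
    {w : ι → ℝ} (hw₀ : ∀ i ∈ s, 0 ≤ w i) (hw₁ : ∑ i ∈ s, w i = 1) {f : ι → Ω → E}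
    (hf : ∀ i ∈ s, MemLp (f i) 2 μ) {h : Ω → E} (hh : MemLp h 2 μ) :
    ∫ ω, ‖h ω - ∑ i ∈ s, w i • f i ω‖ ^ 2 ∂μ
      ≤ 2 * ∫ ω, ‖h ω‖ ^ 2 ∂μ + 2 * ∑ i ∈ s, w i * ∫ ω, ‖f i ω‖ ^ 2 ∂μ := by
  refine (integral_norm_sub_sq_le hh
    (memLp_finsetSum s fun i hi => (hf i hi).const_smul (w i))).trans ?_
  gcongr
  exact integral_norm_convex_comb_sq_le s hw₀ hw₁ hf

end NormedGroup

section InnerProduct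

variable {H : Type*} [NormedAddCommGroup H] [InnerProductSpace ℝ H] [CompleteSpace H]
  [IsProbabilityMeasure μ]

theorem integral_norm_sub_integral_sq {f : Ω → H} (hf : MemLp f 2 μ) :
    ∫ ω, ‖f ω - ∫ ω', f ω' ∂μ‖ ^ 2 ∂μ = ∫ ω, ‖f ω‖ ^ 2 ∂μ - ‖∫ ω, f ω ∂μ‖ ^ 2 := by
  set m := ∫ ω, f ω ∂μ
  have hexpand : ∀ ω, ‖f ω - m‖ ^ 2 = ‖f ω‖ ^ 2 - 2 * inner ℝ m (f ω) + ‖m‖ ^ 2 := fun ω => by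
    rw [norm_sub_sq_real, real_inner_comm]
  have hinner : Integrable (fun ω => 2 * inner ℝ m (f ω)) μ :=
    ((hf.integrable one_le_two).const_inner m).const_mul 2
  have hsq : Integrable (fun ω => ‖f ω‖ ^ 2) μ := hf.integrable_norm_pow'
  have hdiff : Integrable (fun ω => ‖f ω‖ ^ 2 - 2 * inner ℝ m (f ω)) μ := hsq.sub hinner
  simp_rw [hexpand]
  rw [integral_add hdiff (integrable_const _), integral_sub hsq hinner, integral_const_mul,
    integral_inner (hf.integrable one_le_two), real_inner_self_eq_norm_sq]
  simp only [integral_const, probReal_univ, one_smul]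
  ring

theorem integral_norm_sq_le_of_norm_integral_le {f : Ω → H} (hf : MemLp f 2 μ) {G s : ℝ}
    (hG : ‖∫ ω, f ω ∂μ‖ ≤ G)
    (hs : ∫ ω, ‖f ω - ∫ ω', f ω' ∂μ‖ ^ 2 ∂μ ≤ s ^ 2) :
    ∫ ω, ‖f ω‖ ^ 2 ∂μ ≤ G ^ 2 + s ^ 2 := by
  rw [integral_norm_sub_integral_sq hf] at hs
  have := pow_le_pow_left₀ (norm_nonneg _) hG 2
  linarith

theorem integral_norm_sum_const_smul_sq_le {ι : Type*} (s : Finset ι) (η : ℝ) {f : ι → Ω → H}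
    {G σ : ι → ℝ} (hf : ∀ i ∈ s, MemLp (f i) 2 μ)
    (hG : ∀ i ∈ s, ‖∫ ω, f i ω ∂μ‖ ≤ G i)
    (hσ : ∀ i ∈ s, ∫ ω, ‖f i ω - ∫ ω', f i ω' ∂μ‖ ^ 2 ∂μ ≤ σ i ^ 2) :
    ∫ ω, ‖∑ i ∈ s, η • f i ω‖ ^ 2 ∂μ ≤ η ^ 2 * #s * ∑ i ∈ s, (G i ^ 2 + σ i ^ 2) := by
  calc ∫ ω, ‖∑ i ∈ s, η • f i ω‖ ^ 2 ∂μ ≤ #s * ∑ i ∈ s, ∫ ω, ‖η • f i ω‖ ^ 2 ∂μ :=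
        integral_norm_sum_sq_le_card_mul s fun i hi => (hf i hi).const_smul η
    _ = η ^ 2 * #s * ∑ i ∈ s, ∫ ω, ‖f i ω‖ ^ 2 ∂μ := by
        simp only [norm_smul, mul_pow, Real.norm_eq_abs, sq_abs, integral_const_mul, ← mul_sum]
        ring
    _ ≤ η ^ 2 * #s * ∑ i ∈ s, (G i ^ 2 + σ i ^ 2) := by
        gcongr with i hi
        exact integral_norm_sq_le_of_norm_integral_le (hf i hi) (hG i hi) (hσ i hi)

end InnerProduct

end SecondMoments

theorem isfl_model_deviation_bound_general
    {H : Type*} [NormedAddCommGroup H] [InnerProductSpace ℝ H] [CompleteSpace H]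
    {Ω : Type*} [MeasurableSpace Ω] (P : Measure Ω) [IsProbabilityMeasure P]
    (K : ℕ) (hK : 1 ≤ K)
    (π : Fin K → ℝ) (hπ0 : ∀ l, 0 ≤ π l) (hπ1 : ∑ l, π l = 1)
    (η : ℝ) (n El : ℕ) (hnEl : n ≤ El)
    (g : Fin K → ℕ → Ω → H) (G : ℕ → ℝ) (σ : Fin K → ℕ → ℝ)
    (hint : ∀ (l : Fin K), ∀ τ ∈ Finset.range n, MemLp (g l τ) 2 P)
    (hGbd : ∀ (l : Fin K), ∀ τ ∈ Finset.range n, ‖∫ ω, g l τ ω ∂P‖ ≤ G τ)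
    (hσbd : ∀ (l : Fin K), ∀ τ ∈ Finset.range n,
      ∫ ω, ‖g l τ ω - ∫ ω', g l τ ω' ∂P‖ ^ 2 ∂P ≤ (σ l τ) ^ 2)
    (k : Fin K) :
    ∫ ω, ‖(∑ τ ∈ Finset.range n, η • g k τ ω) -
        ∑ l, π l • ∑ τ ∈ Finset.range n, η • g l τ ω‖ ^ 2 ∂P ≤
      2 * η ^ 2 * El * ∑ τ ∈ Finset.range n,
        ((K + 1) * (G τ) ^ 2 + (σ k τ) ^ 2 + ∑ l, π l * (σ l τ) ^ 2) := by
  set S : Fin K → Ω → H := fun l ω => ∑ τ ∈ range n, η • g l τ ω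
  have hS : ∀ l, MemLp (S l) 2 P := fun l =>
    memLp_finsetSum _ fun τ hτ => (hint l τ hτ).const_smul η
  have hSbd : ∀ l, ∫ ω, ‖S l ω‖ ^ 2 ∂P ≤ η ^ 2 * n * ∑ τ ∈ range n, (G τ ^ 2 + σ l τ ^ 2) :=
    fun l => by
      simpa using integral_norm_sum_const_smul_sq_le (range n) η (hint l) (hGbd l) (hσbd l)
  have hφ : 0 ≤ ∑ τ ∈ range n, (2 * G τ ^ 2 + σ k τ ^ 2 + ∑ l, π l * σ l τ ^ 2) :=
    sum_nonneg fun τ _ => add_nonneg (by positivity)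
      (sum_nonneg fun l _ => mul_nonneg (hπ0 l) (sq_nonneg _))
  have hK2 : (2 : ℝ) ≤ K + 1 := by norm_cast; omega
  calc ∫ ω, ‖S k ω - ∑ l, π l • S l ω‖ ^ 2 ∂P
      ≤ 2 * ∫ ω, ‖S k ω‖ ^ 2 ∂P + 2 * ∑ l, π l * ∫ ω, ‖S l ω‖ ^ 2 ∂P :=
        integral_norm_sub_convex_comb_sq_le _ (fun l _ => hπ0 l) hπ1 (fun l _ => hS l) (hS k)
    _ ≤ 2 * (η ^ 2 * n * ∑ τ ∈ range n, (G τ ^ 2 + σ k τ ^ 2))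
        + 2 * ∑ l, π l * (η ^ 2 * n * ∑ τ ∈ range n, (G τ ^ 2 + σ l τ ^ 2)) := by
        gcongr with l
        exacts [hSbd k, hπ0 l, hSbd l]
    _ = 2 * η ^ 2 * n * (∑ τ ∈ range n, (G τ ^ 2 + σ k τ ^ 2)
          + ∑ τ ∈ range n, (G τ ^ 2 + ∑ l, π l * σ l τ ^ 2)) := by
        simp only [mul_left_comm (π _) (η ^ 2 * n), ← mul_sum,
          sum_mul_sum_add_of_sum_eq_one univ (range n) hπ1]
        ring
    _ = 2 * η ^ 2 * n * ∑ τ ∈ range n, (2 * G τ ^ 2 + σ k τ ^ 2 + ∑ l, π l * σ l τ ^ 2) := by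
        rw [← sum_add_distrib]
        exact congrArg _ (sum_congr rfl fun τ _ => by ring)
    _ ≤ 2 * η ^ 2 * El * ∑ τ ∈ range n, ((K + 1) * G τ ^ 2 + σ k τ ^ 2 + ∑ l, π l * σ l τ ^ 2) := by
        gcongr

/-- Lemma 1 of the ISFL paper (model deviation bound): the expected squared norm of the
deviation between a client's accumulated stochastic gradient steps and the aggregated ones
is bounded by `2 η² E_l φ_k(t)`. -/
theorem isfl_model_deviation_bound
    {H : Type*} [NormedAddCommGroup H] [InnerProductSpace ℝ H] [CompleteSpace H]
    {Ω : Type*} [MeasurableSpace Ω] (P : Measure Ω) [IsProbabilityMeasure P]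
    (K : ℕ) (hK : 1 ≤ K)
    (π : Fin K → ℝ) (hπ0 : ∀ l, 0 ≤ π l) (hπ1 : ∑ l, π l = 1)
    (η : ℝ) (hη : 0 < η) (n El : ℕ) (hn : 0 < n) (hnEl : n ≤ El)
    (g : Fin K → ℕ → Ω → H) (G : ℕ → ℝ) (σ : Fin K → ℕ → ℝ)
    (hG0 : ∀ τ ∈ Finset.range n, 0 ≤ G τ)
    (hσ0 : ∀ (l : Fin K), ∀ τ ∈ Finset.range n, 0 ≤ σ l τ)
    (hint : ∀ (l : Fin K), ∀ τ ∈ Finset.range n, MemLp (g l τ) 2 P)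
    (hGbd : ∀ (l : Fin K), ∀ τ ∈ Finset.range n, ‖∫ ω, g l τ ω ∂P‖ ≤ G τ)
    (hσbd : ∀ (l : Fin K), ∀ τ ∈ Finset.range n,
      ∫ ω, ‖g l τ ω - ∫ ω', g l τ ω' ∂P‖ ^ 2 ∂P ≤ (σ l τ) ^ 2)
    (k : Fin K) :
    ∫ ω, ‖(∑ τ ∈ Finset.range n, η • g k τ ω) -
        ∑ l, π l • ∑ τ ∈ Finset.range n, η • g l τ ω‖ ^ 2 ∂P ≤
      2 * η ^ 2 * El * ∑ τ ∈ Finset.range n,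
        ((K + 1) * (G τ) ^ 2 + (σ k τ) ^ 2 + ∑ l, π l * (σ l τ) ^ 2) :=
  isfl_model_deviation_bound_general P K hK π hπ0 hπ1 η n El hnEl g G σ hint hGbd hσbd k
end

section
/- Let H be a real inner product space, C ≥ 1, and let p : Fin C → ℝ and q : Fin C → ℝ be probability vectors. For each i ∈ Fin C let g_i, h_i ∈ H. Then ‖ Σ_i q_i g_i − Σ_i p_i h_i ‖² ≤ ( 1 + Σ_i (q_i − p_i)² ) · ( ‖ Σ_i q_i (g_i − h_i) ‖² + Σ_i ‖h_i‖² ). -/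
open Finset

/-- Single-client gradient-deviation inequality from the proof of Theorem 1 of the ISFL paper. -/
theorem isfl_single_client_gradient_deviation
    {H : Type*} [NormedAddCommGroup H] [InnerProductSpace ℝ H]
    (C : ℕ) (hC : 1 ≤ C)
    (p q : Fin C → ℝ)
    (hp0 : ∀ i, 0 ≤ p i) (hp1 : ∑ i, p i = 1)
    (hq0 : ∀ i, 0 ≤ q i) (hq1 : ∑ i, q i = 1)
    (g h : Fin C → H) :
    ‖(∑ i, q i • g i) - ∑ i, p i • h i‖ ^ 2 ≤
      (1 + ∑ i, (q i - p i) ^ 2) *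
        (‖∑ i, q i • (g i - h i)‖ ^ 2 + ∑ i, ‖h i‖ ^ 2) := by
  set S : ℝ := ∑ i, (q i - p i) ^ 2 with hSdef
  set T : ℝ := ∑ i, ‖h i‖ ^ 2 with hTdef
  set A : ℝ := ‖∑ i, q i • (g i - h i)‖ with hAdef
  set B : ℝ := ‖∑ i, (q i - p i) • h i‖ with hBdef
  have hS : 0 ≤ S := Finset.sum_nonneg fun i _ => sq_nonneg _
  have hT : 0 ≤ T := Finset.sum_nonneg fun i _ => sq_nonneg _
  have hA : 0 ≤ A := norm_nonneg _
  have hB : 0 ≤ B := norm_nonneg _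
  have key : (∑ i, q i • g i) - ∑ i, p i • h i
      = (∑ i, q i • (g i - h i)) + ∑ i, (q i - p i) • h i := by
    rw [← Finset.sum_add_distrib, ← Finset.sum_sub_distrib]
    refine Finset.sum_congr rfl fun i _ => ?_
    rw [smul_sub, sub_smul]
    abel
  have hB2 : B ^ 2 ≤ S * T := by
    have h1 : B ≤ ∑ i, |q i - p i| * ‖h i‖ := by
      refine (norm_sum_le _ _).trans ?_
      refine Finset.sum_le_sum fun i _ => ?_
      rw [norm_smul, Real.norm_eq_abs]
    have h2 : (∑ i, |q i - p i| * ‖h i‖) ^ 2 ≤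
        (∑ i, |q i - p i| ^ 2) * ∑ i, ‖h i‖ ^ 2 :=
      Finset.sum_mul_sq_le_sq_mul_sq Finset.univ _ _
    have h3 : (∑ i, |q i - p i| ^ 2) = S := by
      simp [hSdef, sq_abs]
    calc B ^ 2 ≤ (∑ i, |q i - p i| * ‖h i‖) ^ 2 := by
          apply pow_le_pow_left₀ hB h1
      _ ≤ S * T := by rw [← h3, hTdef]; exact h2
  have htri : ‖(∑ i, q i • g i) - ∑ i, p i • h i‖ ≤ A + B := by
    rw [key]; exact norm_add_le _ _
  have hsq : ‖(∑ i, q i • g i) - ∑ i, p i • h i‖ ^ 2 ≤ (A + B) ^ 2 :=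
    pow_le_pow_left₀ (norm_nonneg _) htri 2
  refine hsq.trans ?_
  have hBle' : B ≤ Real.sqrt (S * T) := by
    have := Real.sqrt_le_sqrt hB2
    rwa [Real.sqrt_sq hB] at this
  have hst : Real.sqrt (S * T) = Real.sqrt S * Real.sqrt T := Real.sqrt_mul hS T
  have hamgm : 2 * (Real.sqrt S * A) * Real.sqrt T ≤ (Real.sqrt S * A) ^ 2 + Real.sqrt T ^ 2 :=
    two_mul_le_add_sq _ _
  have hsqS : Real.sqrt S ^ 2 = S := Real.sq_sqrt hS
  have hsqT : Real.sqrt T ^ 2 = T := Real.sq_sqrt hT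
  have h2AB : 2 * A * B ≤ S * A ^ 2 + T := by
    have : 2 * A * B ≤ 2 * A * (Real.sqrt S * Real.sqrt T) := by
      rw [← hst]
      exact mul_le_mul_of_nonneg_left hBle' (by positivity)
    nlinarith [hamgm, hsqS, hsqT]
  nlinarith [h2AB, hB2]
end

section
/- Let H be a real inner product space, C ≥ 1, K ≥ 1. Let p : Fin C → ℝ be a probability vector, π : Fin K → ℝ a probability vector, and for each k ∈ Fin K let q^k : Fin C → ℝ be a probability vector. For each i ∈ Fin C let h_i ∈ H; for each k ∈ Fin K let θ^k, θ̄ ∈ H and, for each i, let g^{k,i} ∈ H and L_{k,i} ≥ 0 satisfy ‖g^{k,i} − h_i‖ ≤ L_{k,i} ‖θ^k − θ̄‖. Then ‖ Σ_k π_k Σ_i q^k_i g^{k,i} − Σ_i p_i h_i ‖² ≤ Σ_k π_k ( 1 + Σ_i (q^k_i − p_i)² ) · ( Σ_i q^k_i L_{k,i}² ‖θ^k − θ̄‖² + Σ_i ‖h_i‖² ). -/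
open Finset

/-- Jensen's inequality for squares with probability weights. -/
lemma jensen_sq {ι : Type*} (s : Finset ι) (w f : ι → ℝ) (hw : ∀ i ∈ s, 0 ≤ w i)
    (hw1 : ∑ i ∈ s, w i = 1) :
    (∑ i ∈ s, w i * f i) ^ 2 ≤ ∑ i ∈ s, w i * f i ^ 2 := by
  have h := Finset.sum_mul_sq_le_sq_mul_sq s (fun i => Real.sqrt (w i))
    (fun i => Real.sqrt (w i) * f i)
  have e1 : ∑ i ∈ s, Real.sqrt (w i) * (Real.sqrt (w i) * f i) = ∑ i ∈ s, w i * f i := by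
    refine Finset.sum_congr rfl fun i hi => ?_
    rw [← mul_assoc, Real.mul_self_sqrt (hw i hi)]
  have e2 : ∑ i ∈ s, (Real.sqrt (w i)) ^ 2 = 1 := by
    rw [← hw1]; exact Finset.sum_congr rfl fun i hi => Real.sq_sqrt (hw i hi)
  have e3 : ∑ i ∈ s, (Real.sqrt (w i) * f i) ^ 2 = ∑ i ∈ s, w i * f i ^ 2 := by
    refine Finset.sum_congr rfl fun i hi => ?_
    rw [mul_pow, Real.sq_sqrt (hw i hi)]
  calc (∑ i ∈ s, w i * f i) ^ 2 = (∑ i ∈ s, Real.sqrt (w i) * (Real.sqrt (w i) * f i)) ^ 2 := by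
        rw [e1]
    _ ≤ (∑ i ∈ s, (Real.sqrt (w i)) ^ 2) * ∑ i ∈ s, (Real.sqrt (w i) * f i) ^ 2 := h
    _ = ∑ i ∈ s, w i * f i ^ 2 := by rw [e2, e3, one_mul]

/-- Key scalar-side combination lemma. -/
lemma aux_norm_sq {H : Type*} [NormedAddCommGroup H] [InnerProductSpace ℝ H]
    (a b : H) (T S U : ℝ) (hT : 0 ≤ T) (hS : 0 ≤ S) (hU : 0 ≤ U)
    (ha : ‖a‖ ^ 2 ≤ T) (hb : ‖b‖ ^ 2 ≤ S * U) :
    ‖a + b‖ ^ 2 ≤ (1 + S) * (T + U) := by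
  have h1 : ‖a + b‖ ≤ ‖a‖ + ‖b‖ := norm_add_le a b
  have h2 : ‖a + b‖ ^ 2 ≤ (‖a‖ + ‖b‖) ^ 2 := pow_le_pow_left₀ (norm_nonneg _) h1 2
  have hab : 2 * (‖a‖ * ‖b‖) ≤ S * T + U := by
    have hx : 0 ≤ ‖a‖ * ‖b‖ := mul_nonneg (norm_nonneg a) (norm_nonneg b)
    have hkey : (2 * (‖a‖ * ‖b‖)) ^ 2 ≤ (S * T + U) ^ 2 := by
      have h4 : (‖a‖ * ‖b‖) ^ 2 ≤ T * (S * U) := by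
        rw [mul_pow]; exact mul_le_mul ha hb (sq_nonneg _) hT
      nlinarith [sq_nonneg (S * T - U), mul_nonneg hS hT, mul_nonneg (mul_nonneg hS hT) hU]
    have hSTU : (0:ℝ) ≤ S * T + U := by positivity
    exact (abs_le_of_sq_le_sq' hkey hSTU).2
  nlinarith [sq_nonneg (‖a‖ + ‖b‖)]

/-- Multi-client gradient-deviation bound from the proof of Theorem 1 of the ISFL paper. -/
theorem isfl_multi_client_gradient_deviation
    {H : Type*} [NormedAddCommGroup H] [InnerProductSpace ℝ H]
    (C K : ℕ) (hC : 1 ≤ C) (hK : 1 ≤ K)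
    (p : Fin C → ℝ) (hp0 : ∀ i, 0 ≤ p i) (hp1 : ∑ i, p i = 1)
    (π : Fin K → ℝ) (hπ0 : ∀ k, 0 ≤ π k) (hπ1 : ∑ k, π k = 1)
    (q : Fin K → Fin C → ℝ) (hq0 : ∀ k i, 0 ≤ q k i) (hq1 : ∀ k, ∑ i, q k i = 1)
    (h : Fin C → H) (θ : Fin K → H) (θbar : H)
    (g : Fin K → Fin C → H) (L : Fin K → Fin C → ℝ) (hL0 : ∀ k i, 0 ≤ L k i)
    (hLip : ∀ k i, ‖g k i - h i‖ ≤ L k i * ‖θ k - θbar‖) :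
    ‖(∑ k, π k • ∑ i, q k i • g k i) - ∑ i, p i • h i‖ ^ 2 ≤
      ∑ k, π k * ((1 + ∑ i, (q k i - p i) ^ 2) *
        ((∑ i, q k i * (L k i) ^ 2) * ‖θ k - θbar‖ ^ 2 + ∑ i, ‖h i‖ ^ 2)) := by
  set v : Fin K → H := fun k => (∑ i, q k i • g k i) - ∑ i, p i • h i with hv
  -- rewrite LHS vector as weighted sum of deviations
  have hvec : (∑ k, π k • ∑ i, q k i • g k i) - ∑ i, p i • h i = ∑ k, π k • v k := by
    simp only [hv, smul_sub, Finset.sum_sub_distrib, ← Finset.sum_smul, hπ1, one_smul]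
  rw [hvec]
  -- per-client bound
  have hclient : ∀ k, ‖v k‖ ^ 2 ≤ (1 + ∑ i, (q k i - p i) ^ 2) *
      ((∑ i, q k i * (L k i) ^ 2) * ‖θ k - θbar‖ ^ 2 + ∑ i, ‖h i‖ ^ 2) := by
    intro k
    have hdecomp : v k = (∑ i, q k i • (g k i - h i)) + ∑ i, (q k i - p i) • h i := by
      simp only [hv, smul_sub, sub_smul, Finset.sum_sub_distrib]
      abel
    set T : ℝ := (∑ i, q k i * (L k i) ^ 2) * ‖θ k - θbar‖ ^ 2 with hT
    set S : ℝ := ∑ i, (q k i - p i) ^ 2 with hS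
    set U : ℝ := ∑ i, ‖h i‖ ^ 2 with hU
    have hTnn : 0 ≤ T := by
      apply mul_nonneg _ (sq_nonneg _)
      exact Finset.sum_nonneg fun i _ => mul_nonneg (hq0 k i) (sq_nonneg _)
    have hSnn : 0 ≤ S := Finset.sum_nonneg fun i _ => sq_nonneg _
    have hUnn : 0 ≤ U := Finset.sum_nonneg fun i _ => sq_nonneg _
    have ha : ‖∑ i, q k i • (g k i - h i)‖ ^ 2 ≤ T := by
      have h1 : ‖∑ i, q k i • (g k i - h i)‖ ≤ ∑ i, q k i * (L k i * ‖θ k - θbar‖) := by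
        refine (norm_sum_le _ _).trans (Finset.sum_le_sum fun i _ => ?_)
        rw [norm_smul, Real.norm_eq_abs, abs_of_nonneg (hq0 k i)]
        exact mul_le_mul_of_nonneg_left (hLip k i) (hq0 k i)
      have h2 : (∑ i, q k i * (L k i * ‖θ k - θbar‖)) ^ 2 ≤
          ∑ i, q k i * (L k i * ‖θ k - θbar‖) ^ 2 :=
        jensen_sq Finset.univ _ _ (fun i _ => hq0 k i) (hq1 k)
      have h3 : (∑ i, q k i * (L k i * ‖θ k - θbar‖) ^ 2) = T := by
        rw [hT, Finset.sum_mul]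
        exact Finset.sum_congr rfl fun i _ => by ring
      have h0 : 0 ≤ ∑ i, q k i * (L k i * ‖θ k - θbar‖) := by
        exact Finset.sum_nonneg fun i _ => mul_nonneg (hq0 k i)
          (mul_nonneg (hL0 k i) (norm_nonneg _))
      calc ‖∑ i, q k i • (g k i - h i)‖ ^ 2
          ≤ (∑ i, q k i * (L k i * ‖θ k - θbar‖)) ^ 2 :=
            pow_le_pow_left₀ (norm_nonneg _) h1 2
        _ ≤ T := h3 ▸ h2
    have hb : ‖∑ i, (q k i - p i) • h i‖ ^ 2 ≤ S * U := by
      have h1 : ‖∑ i, (q k i - p i) • h i‖ ≤ ∑ i, |q k i - p i| * ‖h i‖ := by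
        refine (norm_sum_le _ _).trans (Finset.sum_le_sum fun i _ => ?_)
        rw [norm_smul, Real.norm_eq_abs]
      have h2 : (∑ i, |q k i - p i| * ‖h i‖) ^ 2 ≤
          (∑ i, |q k i - p i| ^ 2) * ∑ i, ‖h i‖ ^ 2 :=
        Finset.sum_mul_sq_le_sq_mul_sq _ _ _
      have h3 : (∑ i, |q k i - p i| ^ 2) = S := by
        exact Finset.sum_congr rfl fun i _ => sq_abs _
      calc ‖∑ i, (q k i - p i) • h i‖ ^ 2
          ≤ (∑ i, |q k i - p i| * ‖h i‖) ^ 2 := pow_le_pow_left₀ (norm_nonneg _) h1 2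
        _ ≤ S * U := by rw [← h3, hU]; exact h2
    rw [hdecomp]
    exact aux_norm_sq _ _ T S U hTnn hSnn hUnn ha hb
  -- Jensen over clients
  have hnn : ∀ k, (0:ℝ) ≤ (1 + ∑ i, (q k i - p i) ^ 2) *
      ((∑ i, q k i * (L k i) ^ 2) * ‖θ k - θbar‖ ^ 2 + ∑ i, ‖h i‖ ^ 2) :=
    fun k => le_trans (sq_nonneg _) (hclient k)
  have step1 : ‖∑ k, π k • v k‖ ≤ ∑ k, π k * ‖v k‖ := by
    refine (norm_sum_le _ _).trans (le_of_eq (Finset.sum_congr rfl fun k _ => ?_))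
    rw [norm_smul, Real.norm_eq_abs, abs_of_nonneg (hπ0 k)]
  have step2 : (∑ k, π k * ‖v k‖) ^ 2 ≤ ∑ k, π k * ‖v k‖ ^ 2 :=
    jensen_sq Finset.univ _ _ (fun k _ => hπ0 k) hπ1
  have step3 : ∑ k, π k * ‖v k‖ ^ 2 ≤ ∑ k, π k * ((1 + ∑ i, (q k i - p i) ^ 2) *
      ((∑ i, q k i * (L k i) ^ 2) * ‖θ k - θbar‖ ^ 2 + ∑ i, ‖h i‖ ^ 2)) :=
    Finset.sum_le_sum fun k _ => mul_le_mul_of_nonneg_left (hclient k) (hπ0 k)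
  have h0 : 0 ≤ ∑ k, π k * ‖v k‖ :=
    Finset.sum_nonneg fun k _ => mul_nonneg (hπ0 k) (norm_nonneg _)
  calc ‖∑ k, π k • v k‖ ^ 2 ≤ (∑ k, π k * ‖v k‖) ^ 2 := pow_le_pow_left₀ (norm_nonneg _) step1 2
    _ ≤ ∑ k, π k * ‖v k‖ ^ 2 := step2
    _ ≤ _ := step3
end

section
/- Let C ≥ 1, let L : Fin C → ℝ satisfy S := Σ_i L_i² > 0 and D := Σ_m (1 − C·L_m²/S)² > 0, and define α_j := (1 − C·L_j²/S)/√D. Let p, q : Fin C → ℝ satisfy Σ_i p_i = 1 and Σ_i q_i = 1. Set A := 1 + Σ_i (p_i − q_i)² and B := Σ_i q_i L_i², and assume B > 0. If there exists λ ∈ ℝ such that 2(q_j − p_j)·B + L_j²·A = λ for every j ∈ Fin C, then for every j ∈ Fin C: q_j = p_j + α_j·√(A − 1). -/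
open Finset

/-!
Summing the stationarity conditions over `j` kills the `q - p` terms, since `p` and `q` have the
same total mass; this gives `C λ = S A`. Hence `q - p = c • v` with `v_j = 1 - C L_j² / S` and
`c = A S / (2 B C) ≥ 0`, so `A - 1 = ‖q - p‖² = c² ‖v‖²` and `α_j √(A - 1) = (v_j / ‖v‖) c ‖v‖ = c v_j`.
-/

/-- The zero-sum gradient-Lipschitz deviation factor `α_j` of Theorem 2 of the ISFL paper. -/
noncomputable def isflAlpha (C : ℕ) (L : Fin C → ℝ) (j : Fin C) : ℝ :=
  (1 - (C : ℝ) * (L j) ^ 2 / ∑ i, (L i) ^ 2) /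
    Real.sqrt (∑ m, (1 - (C : ℝ) * (L m) ^ 2 / ∑ i, (L i) ^ 2) ^ 2)

/-- Evaluated at `A = A(q)`, `B = B(q)`, `w = L²`, this is the interior KKT condition of
minimizing `A(q) B(q)` subject to `∑ q = 1`. -/
def IsKKTStationary {ι : Type*} (p q w : ι → ℝ) (A B lam : ℝ) : Prop :=
  ∀ j, 2 * (q j - p j) * B + w j * A = lam

section Stationary

variable {ι : Type*} [Fintype ι] {p q w : ι → ℝ} {A B lam : ℝ}

theorem IsKKTStationary.card_mul_eq (hpq : ∑ i, p i = ∑ i, q i)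
    (hstat : IsKKTStationary p q w A B lam) : (Fintype.card ι : ℝ) * lam = (∑ i, w i) * A := by
  have hsum := sum_congr rfl fun j (_ : j ∈ univ) => hstat j
  have hdev : ∑ j, 2 * (q j - p j) * B = 0 := by
    rw [← sum_mul, ← mul_sum, sum_sub_distrib, hpq, sub_self, mul_zero, zero_mul]
  rw [sum_add_distrib, hdev, zero_add, ← sum_mul, sum_const, card_univ, nsmul_eq_mul] at hsum
  exact hsum.symm

theorem IsKKTStationary.sub_eq (hpq : ∑ i, p i = ∑ i, q i) (hB : B ≠ 0)
    (hι : (Fintype.card ι : ℝ) ≠ 0) (hstat : IsKKTStationary p q w A B lam) (j : ι) :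
    q j - p j = A / (2 * B) * ((∑ i, w i) / Fintype.card ι - w j) := by
  have hlam : lam = (∑ i, w i) * A / Fintype.card ι := by
    rw [← hstat.card_mul_eq hpq, mul_div_cancel_left₀ _ hι]
  have hj := hstat j
  rw [hlam] at hj
  rw [div_mul_eq_mul_div, eq_div_iff (mul_ne_zero two_ne_zero hB)]
  linear_combination hj

end Stationary

section Normalize

variable {ι : Type*} [Fintype ι]

theorem sqrt_sum_mul_sq {c : ℝ} (hc : 0 ≤ c) (v : ι → ℝ) :
    Real.sqrt (∑ i, (c * v i) ^ 2) = c * Real.sqrt (∑ i, v i ^ 2) := by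
  simp_rw [mul_pow, ← mul_sum]
  rw [Real.sqrt_mul (sq_nonneg c), Real.sqrt_sq hc]

/-- `v / ‖v‖ * ‖v‖ = v`, also for `v = 0`, where `v / ‖v‖` is the junk value `0`. -/
theorem div_sqrt_sum_sq_mul_sqrt_sum_sq (v : ι → ℝ) (j : ι) :
    v j / Real.sqrt (∑ i, v i ^ 2) * Real.sqrt (∑ i, v i ^ 2) = v j := by
  by_cases hv : Real.sqrt (∑ i, v i ^ 2) = 0
  · have hsum : ∑ i, v i ^ 2 = 0 := by
      rwa [Real.sqrt_eq_zero (sum_nonneg fun i _ => sq_nonneg _)] at hv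
    have hvj : v j ^ 2 = 0 :=
      (sum_eq_zero_iff_of_nonneg fun i _ => sq_nonneg (v i)).mp hsum j (mem_univ j)
    rw [pow_eq_zero_iff two_ne_zero |>.mp hvj, zero_div, zero_mul]
  · exact div_mul_cancel₀ _ hv

end Normalize

theorem isfl_optimal_is_probabilities_general
    (C : ℕ) (L : Fin C → ℝ)
    (hS : 0 < ∑ i, (L i) ^ 2)
    (p q : Fin C → ℝ) (hp1 : ∑ i, p i = 1) (hq1 : ∑ i, q i = 1)
    (hB : 0 < ∑ i, q i * (L i) ^ 2)
    (lam : ℝ)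
    (hstat : ∀ j, 2 * (q j - p j) * (∑ i, q i * (L i) ^ 2)
      + (L j) ^ 2 * (1 + ∑ i, (p i - q i) ^ 2) = lam) :
    ∀ j, q j = p j + isflAlpha C L j * Real.sqrt ((1 + ∑ i, (p i - q i) ^ 2) - 1) := by
  intro j
  have hC : (C : ℝ) ≠ 0 := Nat.cast_ne_zero.mpr j.pos.ne'
  set S := ∑ i, L i ^ 2
  set A := 1 + ∑ i, (p i - q i) ^ 2 with hA
  set B := ∑ i, q i * L i ^ 2
  set v : Fin C → ℝ := fun i => 1 - C * L i ^ 2 / S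
  set c := A / (2 * B) * (S / C)
  have hc : 0 ≤ c := by
    have : 0 ≤ A := by positivity
    have := hB.le
    positivity
  have hdev (i : Fin C) : q i - p i = c * v i := by
    have := IsKKTStationary.sub_eq (w := fun i => L i ^ 2) (by rw [hp1, hq1]) hB.ne'
      (by rwa [Fintype.card_fin]) hstat i
    change _ = A / (2 * B) * (S / _ - _) at this
    rw [this, Fintype.card_fin]
    simp only [c, v]
    field_simp
  have hA1 : A - 1 = ∑ i, (c * v i) ^ 2 := by
    rw [hA, add_sub_cancel_left]
    exact sum_congr rfl fun i _ => by rw [← hdev, ← neg_sub, neg_sq]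
  rw [hA1, sqrt_sum_mul_sq hc, isflAlpha, mul_left_comm, div_sqrt_sum_sq_mul_sqrt_sum_sq v j,
    ← hdev, add_sub_cancel]

/-- Algebraic core of Theorem 2 (Optimal IS Probabilities) of the ISFL paper: any solution of
the interior KKT stationarity conditions has the water-filling form `q_j = p_j + α_j √(A−1)`. -/
theorem isfl_optimal_is_probabilities
    (C : ℕ) (hC : 1 ≤ C) (L : Fin C → ℝ)
    (hS : 0 < ∑ i, (L i) ^ 2)
    (hD : 0 < ∑ m, (1 - (C : ℝ) * (L m) ^ 2 / ∑ i, (L i) ^ 2) ^ 2)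
    (p q : Fin C → ℝ) (hp1 : ∑ i, p i = 1) (hq1 : ∑ i, q i = 1)
    (hB : 0 < ∑ i, q i * (L i) ^ 2)
    (lam : ℝ)
    (hstat : ∀ j, 2 * (q j - p j) * (∑ i, q i * (L i) ^ 2)
      + (L j) ^ 2 * (1 + ∑ i, (p i - q i) ^ 2) = lam) :
    ∀ j, q j = p j + isflAlpha C L j * Real.sqrt ((1 + ∑ i, (p i - q i) ^ 2) - 1) :=
  isfl_optimal_is_probabilities_general C L hS p q hp1 hq1 hB lam hstat
end

section
/- Let C ≥ 1 and L : Fin C → ℝ with S := Σ_i L_i² > 0. Let p, q : Fin C → ℝ satisfy Σ_i p_i = 1 and Σ_i q_i = 1. Set A := 1 + Σ_i (p_i − q_i)² and B := Σ_i q_i L_i², and assume B ≠ 0. If there exists λ ∈ ℝ such that 2(q_j − p_j)·B + L_j²·A = λ for every j ∈ Fin C, then 4·B²·(A − 1) = λ²·Σ_m (1 − C·L_m²/S)². -/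
open Finset

/-- Intermediate claim in the proof of Theorem 2 of the ISFL paper: substituting the interior
KKT stationarity conditions into the definition of `A` yields `4B²(A−1) = λ² Σ_m (1 − C L_m²/S)²`. -/
theorem isfl_kkt_B_identity
    (C : ℕ) (hC : 1 ≤ C) (L : Fin C → ℝ)
    (hS : 0 < ∑ i, (L i) ^ 2)
    (p q : Fin C → ℝ) (hp1 : ∑ i, p i = 1) (hq1 : ∑ i, q i = 1)
    (hB : (∑ i, q i * (L i) ^ 2) ≠ 0)
    (lam : ℝ)
    (hstat : ∀ j, 2 * (q j - p j) * (∑ i, q i * (L i) ^ 2)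
      + (L j) ^ 2 * (1 + ∑ i, (p i - q i) ^ 2) = lam) :
    4 * (∑ i, q i * (L i) ^ 2) ^ 2 * ((1 + ∑ i, (p i - q i) ^ 2) - 1) =
      lam ^ 2 * ∑ m, (1 - (C : ℝ) * (L m) ^ 2 / ∑ i, (L i) ^ 2) ^ 2 := by
  set B := ∑ i, q i * (L i) ^ 2 with hBdef
  set A := 1 + ∑ i, (p i - q i) ^ 2 with hAdef
  set S := ∑ i, (L i) ^ 2 with hSdef
  have hS0 : S ≠ 0 := ne_of_gt hS
  have hqp : ∑ j, (q j - p j) = 0 := by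
    rw [Finset.sum_sub_distrib, hq1, hp1]; ring
  have hsum : S * A = C * lam := by
    have h2 : ∑ j, (2 * (q j - p j) * B + (L j) ^ 2 * A) = (C : ℝ) * lam := by
      rw [Finset.sum_congr rfl (fun j _ => hstat j), Finset.sum_const,
        Finset.card_univ, Fintype.card_fin, nsmul_eq_mul]
    rw [Finset.sum_add_distrib] at h2
    have e1 : ∑ j, 2 * (q j - p j) * B = 0 := by
      rw [← Finset.sum_mul, ← Finset.mul_sum, hqp]; ring
    have e2 : ∑ j, (L j) ^ 2 * A = S * A := by
      rw [← Finset.sum_mul]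
    rw [e1, e2, zero_add] at h2
    exact h2
  have key : ∀ j, 2 * (q j - p j) * B = lam * (1 - (C : ℝ) * (L j) ^ 2 / S) := by
    intro j
    have h := hstat j
    have : 2 * (q j - p j) * B = lam - (L j) ^ 2 * A := by linarith
    rw [this]
    field_simp
    nlinarith [hsum]
  have hAm1 : A - 1 = ∑ j, (q j - p j) ^ 2 := by
    rw [hAdef]
    simp only [add_sub_cancel_left]
    exact Finset.sum_congr rfl (fun j _ => by ring)
  calc 4 * B ^ 2 * (A - 1) = ∑ j, (2 * (q j - p j) * B) ^ 2 := by
        rw [hAm1, Finset.mul_sum]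
        exact Finset.sum_congr rfl (fun j _ => by ring)
    _ = ∑ j, (lam * (1 - (C : ℝ) * (L j) ^ 2 / S)) ^ 2 := by
        exact Finset.sum_congr rfl (fun j _ => by rw [key j])
    _ = lam ^ 2 * ∑ m, (1 - (C : ℝ) * (L m) ^ 2 / S) ^ 2 := by
        rw [Finset.mul_sum]
        exact Finset.sum_congr rfl (fun j _ => by ring)
end

section
/- Let C ≥ 1, let p, p^k : Fin C → ℝ be probability vectors, and let ϖ ∈ ℝ with 0 ≤ ϖ and p_j ≥ ϖ·p^k_j for every j ∈ Fin C. Let α : Fin C → ℝ satisfy Σ_j α_j = 0, and suppose the set N := { j : α_j < 0 } is nonempty. Define Γ* := min_{j ∈ N} (p_j − ϖ·p^k_j)/(−α_j), and define q*_j := max{ ϖ·p^k_j, p_j + α_j·Γ* } for each j. Then q*_j = p_j + α_j·Γ* for every j, Σ_j q*_j = 1, and q*_j ≥ ϖ·p^k_j for every j; that is, q* is a feasible point of the ISFL weight-selection problem. -/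
open Finset

/-- Combination of Theorems 2 and 3 of the ISFL paper: the water-filled vector
`q*_j = max{ϖ p^k_j, p_j + α_j Γ*}` coincides componentwise with `p + Γ* α`, sums to one,
and respects the floor constraints, i.e. it is feasible for the ISFL weight-selection problem. -/
theorem isfl_water_filled_vector_feasible
    (C : ℕ) (hC : 1 ≤ C)
    (p pk : Fin C → ℝ)
    (hp0 : ∀ i, 0 ≤ p i) (hp1 : ∑ i, p i = 1)
    (hpk0 : ∀ i, 0 ≤ pk i) (hpk1 : ∑ i, pk i = 1)
    (ϖ : ℝ) (hϖ : 0 ≤ ϖ) (hfloor : ∀ j, ϖ * pk j ≤ p j)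
    (α : Fin C → ℝ) (hα : ∑ j, α j = 0)
    (hNne : (Finset.univ.filter (fun j => α j < 0)).Nonempty)
    (Γstar : ℝ)
    (hΓstar : Γstar = (Finset.univ.filter (fun j => α j < 0)).inf' hNne
      (fun j => (p j - ϖ * pk j) / (-α j)))
    (qstar : Fin C → ℝ)
    (hqstar : ∀ j, qstar j = max (ϖ * pk j) (p j + α j * Γstar)) :
    (∀ j, qstar j = p j + α j * Γstar) ∧
    (∑ j, qstar j = 1) ∧
    (∀ j, ϖ * pk j ≤ qstar j) := by
  have hΓ0 : 0 ≤ Γstar := by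
    rw [hΓstar]
    apply Finset.le_inf'
    intro j hj
    rw [Finset.mem_filter] at hj
    exact div_nonneg (by linarith [hfloor j]) (by linarith [hj.2])
  have key : ∀ j, ϖ * pk j ≤ p j + α j * Γstar := by
    intro j
    rcases lt_or_ge (α j) 0 with h | h
    · have hmem : j ∈ Finset.univ.filter (fun j => α j < 0) := by
        simp [h]
      have : Γstar ≤ (p j - ϖ * pk j) / (-α j) := by
        rw [hΓstar]; exact Finset.inf'_le _ hmem
      have hpos : 0 < -α j := by linarith
      rw [le_div_iff₀ hpos] at this
      nlinarith
    · nlinarith [hfloor j, mul_nonneg h hΓ0]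
  have heq : ∀ j, qstar j = p j + α j * Γstar := fun j => by
    rw [hqstar j, max_eq_right (key j)]
  refine ⟨heq, ?_, fun j => (heq j) ▸ key j⟩
  calc ∑ j, qstar j = ∑ j, (p j + α j * Γstar) := Finset.sum_congr rfl fun j _ => heq j
    _ = (∑ j, p j) + (∑ j, α j) * Γstar := by rw [Finset.sum_add_distrib, Finset.sum_mul]
    _ = 1 := by rw [hp1, hα]; ring
end
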